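/- Let R be a finite commutative chain ring, σ an automorphism of R of order m, λ ∈ U(R) with λ² = 1 and σ^{m−k}(λ) = λ. A λ-constacyclic code C (ideal of R^{γ_λ} C_n) is a k-Galois LCD code (C ∩ C^{⊥_k} = {0}) if and only if C is generated by an idempotent e with e = e·(σ^k(e))*. -/

import Mathlib

/-!
Write `x† = (σᵏ x)*`. Since `λ² = 1` and `σᵏ λ = λ`, `†` is a ring automorphism of
`R^{γ_λ} C_n` with inverse `x ↦ x♯ = (σ⁻ᵏ x)*`, and the Galois form satisfies
`[a† b, x]_k = [b, a x]_k`. Hence `C^{⊥_k}` is an ideal, `C · C^{⊥_k} ⊆ C ∩ C^{⊥_k}`, and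
`e♯ x = 0` whenever `e ∈ C`, `x ∈ C^{⊥_k}`.

A finite chain ring is self-injective, so `|M| ≤ |Hom_R(M, R)|` for every finite `R`-module
(induction on `|M|`, splitting off a cyclic submodule), which gives
`|C| · |C^{⊥_k}| ≥ |Rⁿ|`. If `C` is LCD this forces `Rⁿ = C ⊕ C^{⊥_k}`; writing `1 = e + f`,
`e` is an idempotent generator of `C`, and `e♯ = e♯ e` (as `e♯ f = 0`) gives `e = e e†`.
Conversely, if `e = e e†` then `♯` maps the finite set `C` injectively into, hence onto,
itself; so `e† ∈ C`, `e = e e♯`, and each `x ∈ C ∩ C^{⊥_k}` is `x e e♯ = e♯ x e = 0`.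
-/

open Finset

/-- Multiplication of the twisted group ring `R^{γ_λ} C_n`, where the cyclic
group `C_n` is identified with `Fin n` (additively), elements are coefficient
vectors `Fin n → R`, and `γ_λ(gⁱ,gʲ) = 1` if `i+j < n`, `λ` if `i+j ≥ n`. -/
def ctMul {R : Type*} [CommRing R] {n : ℕ} (lam : Rˣ) (f h : Fin n → R) :
    Fin n → R :=
  fun k => ∑ i : Fin n, ∑ j : Fin n,
    if i + j = k then (if (i : ℕ) + (j : ℕ) < n then 1 else (lam : R)) * (f i * h j) else 0

/-- The classical involution on `R^{γ_λ} C_n`: `Σ αᵢ ḡⁱ ↦ Σ αᵢ ḡ⁻ⁱ`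
(in coefficient form, using `ḡ⁻ⁱ = λ⁻¹ ḡ^{n-i}` for `i ≠ 0`). -/
def ctStar {R : Type*} [CommRing R] {n : ℕ} [NeZero n] (lam : Rˣ) (f : Fin n → R) :
    Fin n → R :=
  fun j => (if j = 0 then 1 else ((lam⁻¹ : Rˣ) : R)) * f (-j)

theorem pow_eq_pow_of_sq_eq_one {M : Type*} [Monoid M] {x : M} (hx : x ^ 2 = 1) {a b : ℕ}
    (h : a % 2 = b % 2) : x ^ a = x ^ b := by
  rw [← Nat.mod_add_div a 2, ← Nat.mod_add_div b 2, pow_add, pow_add, pow_mul, pow_mul, hx,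
    one_pow, one_pow, h]

namespace Fin

variable {n : ℕ}

/-- `γ_λ(gⁱ, gʲ) = λ ^ i.addCarry j`, so every identity of the cocycle and of the involution
below reduces to an identity between carries, checked after multiplying by `n`. -/
def addCarry (i j : Fin n) : ℕ := ((i : ℕ) + j) / n

theorem mul_addCarry_add_val_add (i j : Fin n) :
    n * i.addCarry j + ((i + j : Fin n) : ℕ) = i + j := by
  rw [addCarry, Fin.val_add]
  exact Nat.div_add_mod _ _

theorem addCarry_comm (i j : Fin n) : i.addCarry j = j.addCarry i := by
  rw [addCarry, addCarry, Nat.add_comm]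

theorem addCarry_zero_right [NeZero n] (i : Fin n) : i.addCarry 0 = 0 := by
  simp [addCarry, Nat.div_eq_of_lt i.is_lt]

theorem addCarry_eq_ite (i j : Fin n) :
    i.addCarry j = if (i : ℕ) + j < n then 0 else 1 := by
  unfold addCarry
  split_ifs with h
  · exact Nat.div_eq_of_lt h
  · exact Nat.div_eq_of_lt_le (by omega) (by omega)

theorem addCarry_self_neg [NeZero n] (i : Fin n) : i.addCarry (-i) = if i = 0 then 0 else 1 := by
  rcases eq_or_ne i 0 with rfl | hi
  · simp [addCarry_zero_right]
  · have : (i : ℕ) ≠ 0 := Fin.val_ne_zero_iff.mpr hi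
    rw [addCarry_eq_ite, Fin.val_neg', Nat.mod_eq_of_lt (by omega), if_neg hi, if_neg (by omega)]

theorem addCarry_add_addCarry (i j l : Fin n) :
    i.addCarry j + (i + j).addCarry l = j.addCarry l + i.addCarry (j + l) := by
  apply Nat.eq_of_mul_eq_mul_left i.pos
  have h₁ := mul_addCarry_add_val_add i j
  have h₂ := mul_addCarry_add_val_add (i + j) l
  have h₃ := mul_addCarry_add_val_add j l
  have h₄ := mul_addCarry_add_val_add i (j + l)
  rw [add_assoc] at h₂
  rw [mul_add, mul_add]
  linarith

theorem addCarry_self_neg_eq [NeZero n] (i k : Fin n) :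
    i.addCarry (-i) = (-i).addCarry k + i.addCarry (k - i) := by
  have h := addCarry_add_addCarry i (-i) k
  rwa [add_neg_cancel, addCarry_comm 0, addCarry_zero_right, add_zero, neg_add_eq_sub] at h

theorem addCarry_self_neg_add_addCarry_self_neg [NeZero n] (a b : Fin n) :
    a.addCarry (-a) + b.addCarry (-b)
      = (-a).addCarry (-b) + (a + b).addCarry (-(a + b)) + a.addCarry b := by
  apply Nat.eq_of_mul_eq_mul_left a.pos
  have h₁ := mul_addCarry_add_val_add a (-a)
  have h₂ := mul_addCarry_add_val_add b (-b)
  have h₃ := mul_addCarry_add_val_add (-a) (-b)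
  have h₄ := mul_addCarry_add_val_add (a + b) (-(a + b))
  have h₅ := mul_addCarry_add_val_add a b
  rw [add_neg_cancel] at h₁ h₂ h₄
  rw [neg_add] at h₄ ⊢
  simp only [mul_add]
  simp only [Fin.val_zero] at h₁ h₂ h₄
  linarith

end Fin

section TwistedGroupRing

variable {R : Type*} [CommRing R] {n : ℕ} (lam : Rˣ)

theorem ite_lt_eq_pow_addCarry (i j : Fin n) :
    (if (i : ℕ) + j < n then 1 else (lam : R)) = (lam : R) ^ i.addCarry j := by
  rw [Fin.addCarry_eq_ite]
  split_ifs <;> simp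

theorem ctMul_comm (f h : Fin n → R) : ctMul lam f h = ctMul lam h f := by
  funext k
  unfold ctMul
  rw [Finset.sum_comm]
  refine Finset.sum_congr rfl fun j _ => Finset.sum_congr rfl fun i _ => ?_
  rw [add_comm i j, Nat.add_comm (i : ℕ) (j : ℕ), mul_comm (f i) (h j)]

variable [NeZero n]

theorem ctMul_apply (f h : Fin n → R) (k : Fin n) :
    ctMul lam f h k = ∑ i, (lam : R) ^ i.addCarry (k - i) * (f i * h (k - i)) := by
  refine Finset.sum_congr rfl fun i _ => ?_
  simp only [ite_lt_eq_pow_addCarry, ← eq_sub_iff_add_eq']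
  exact Finset.sum_ite_eq' _ _ _ |>.trans (if_pos (Finset.mem_univ _))

theorem ctMul_add_right (f h₁ h₂ : Fin n → R) :
    ctMul lam f (h₁ + h₂) = ctMul lam f h₁ + ctMul lam f h₂ := by
  funext k
  simp [ctMul_apply, mul_add, Finset.sum_add_distrib]

theorem ctMul_assoc (f g h : Fin n → R) :
    ctMul lam (ctMul lam f g) h = ctMul lam f (ctMul lam g h) := by
  funext k
  simp only [ctMul_apply, Finset.sum_mul, Finset.mul_sum]
  rw [Finset.sum_comm]
  refine Finset.sum_congr rfl fun i _ => ?_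
  refine (Fintype.sum_equiv (Equiv.addLeft i) _ _ fun j => ?_).symm
  simp only [Equiv.coe_addLeft, add_sub_cancel_left, sub_add_eq_sub_sub]
  have hcarry := Fin.addCarry_add_addCarry i j (k - i - j)
  rw [add_sub_cancel] at hcarry
  have key : (lam : R) ^ (i + j).addCarry (k - i - j) * (lam : R) ^ i.addCarry j
      = (lam : R) ^ i.addCarry (k - i) * (lam : R) ^ j.addCarry (k - i - j) := by
    rw [← pow_add, ← pow_add]
    congr 1
    omega
  linear_combination (f i * g j * h (k - i - j)) * key.symm

def ctOne : Fin n → R := Pi.single 0 1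

theorem ctMul_ctOne (f : Fin n → R) : ctMul lam f ctOne = f := by
  funext k
  rw [ctMul_apply, Finset.sum_eq_single k]
  · simp [ctOne, Fin.addCarry_zero_right]
  · intro i _ hik
    simp [ctOne, sub_eq_zero, Ne.symm hik]
  · simp

end TwistedGroupRing

section Star

variable {R : Type*} [CommRing R] {n : ℕ} [NeZero n] (lam : Rˣ)

theorem ctStar_apply (hlam : (lam : R) ^ 2 = 1) (f : Fin n → R) (j : Fin n) :
    ctStar lam f j = (lam : R) ^ j.addCarry (-j) * f (-j) := by
  have hinv : lam⁻¹ = lam := inv_eq_of_mul_eq_one_right (Units.ext (by simpa [sq] using hlam))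
  simp only [ctStar, hinv, Fin.addCarry_self_neg]
  split_ifs <;> simp

theorem ctStar_ctStar (hlam : (lam : R) ^ 2 = 1) (f : Fin n → R) :
    ctStar lam (ctStar lam f) = f := by
  funext j
  rw [ctStar_apply lam hlam, ctStar_apply lam hlam, neg_neg, ← mul_assoc, ← pow_add,
    Fin.addCarry_comm (-j), pow_eq_pow_of_sq_eq_one hlam (b := 0) (by omega), pow_zero, one_mul]

theorem ctStar_ctMul (hlam : (lam : R) ^ 2 = 1) (f h : Fin n → R) :
    ctStar lam (ctMul lam f h) = ctMul lam (ctStar lam f) (ctStar lam h) := by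
  funext j
  rw [ctStar_apply lam hlam, ctMul_apply, ctMul_apply, Finset.mul_sum]
  refine Fintype.sum_equiv (Equiv.neg (Fin n)) _ _ fun i => ?_
  simp only [Equiv.neg_apply, ctStar_apply lam hlam, neg_neg, sub_neg_eq_add,
    show -(j + i) = -j - i by abel]
  have hcarry := Fin.addCarry_self_neg_add_addCarry_self_neg i (-j - i)
  rw [show i + (-j - i) = -j by abel, show -(-j - i) = j + i by abel, neg_neg,
    Fin.addCarry_comm (-j)] at hcarry
  have key : (lam : R) ^ j.addCarry (-j) * (lam : R) ^ i.addCarry (-j - i)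
      = (lam : R) ^ (-i).addCarry (j + i) * ((lam : R) ^ (-i).addCarry i
        * (lam : R) ^ (j + i).addCarry (-j - i)) := by
    rw [← pow_add, ← pow_add, ← pow_add]
    apply pow_eq_pow_of_sq_eq_one hlam
    rw [Fin.addCarry_comm (-i) i, Fin.addCarry_comm (j + i)]
    omega
  linear_combination (f i * h (-j - i)) * key

end Star

section Conj

variable {R : Type*} [CommRing R] {n : ℕ} [NeZero n] (lam : Rˣ)

theorem map_ctMul (τ : R ≃+* R) (hτ : τ lam = lam) (f h : Fin n → R) :
    (fun k => τ (ctMul lam f h k)) = ctMul lam (fun i => τ (f i)) (fun i => τ (h i)) := by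
  funext k
  simp only [ctMul_apply, map_sum, map_mul, map_pow, hτ]

theorem map_ctStar (hlam : (lam : R) ^ 2 = 1) (τ : R ≃+* R) (hτ : τ lam = lam)
    (f : Fin n → R) : (fun j => τ (ctStar lam f j)) = ctStar lam (fun i => τ (f i)) := by
  funext j
  simp only [ctStar_apply lam hlam, map_mul, map_pow, hτ]

def ctConj (τ : R ≃+* R) (f : Fin n → R) : Fin n → R := ctStar lam fun i => τ (f i)

theorem ctConj_ctMul (hlam : (lam : R) ^ 2 = 1) (τ : R ≃+* R) (hτ : τ lam = lam)
    (f h : Fin n → R) :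
    ctConj lam τ (ctMul lam f h) = ctMul lam (ctConj lam τ f) (ctConj lam τ h) := by
  rw [ctConj, map_ctMul lam τ hτ, ctStar_ctMul lam hlam]
  rfl

theorem ctConj_ctConj_of_comp (hlam : (lam : R) ^ 2 = 1) {τ τ' : R ≃+* R} (hτ' : τ' lam = lam)
    (hττ' : ∀ x, τ' (τ x) = x) (f : Fin n → R) : ctConj lam τ' (ctConj lam τ f) = f := by
  unfold ctConj
  rw [map_ctStar lam hlam τ' hτ']
  simp only [hττ']
  exact ctStar_ctStar lam hlam f

theorem ctConj_symm_ctConj (hlam : (lam : R) ^ 2 = 1) (τ : R ≃+* R) (hτ : τ lam = lam)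
    (f : Fin n → R) : ctConj lam τ.symm (ctConj lam τ f) = f :=
  ctConj_ctConj_of_comp lam hlam (τ.symm_apply_eq.mpr hτ.symm) τ.symm_apply_apply f

theorem ctConj_ctConj_symm (hlam : (lam : R) ^ 2 = 1) (τ : R ≃+* R) (hτ : τ lam = lam)
    (f : Fin n → R) : ctConj lam τ (ctConj lam τ.symm f) = f :=
  ctConj_ctConj_of_comp lam hlam hτ τ.apply_symm_apply f

end Conj

section GaloisForm

variable {R : Type*} [CommRing R] {ι : Type*} [Fintype ι]

def galoisForm (τ : R ≃+* R) (u v : ι → R) : R := ∑ i, u i * τ (v i)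

def galoisDual (τ : R ≃+* R) (C : Submodule R (ι → R)) : Submodule R (ι → R) where
  carrier := {x | ∀ c ∈ C, galoisForm τ c x = 0}
  add_mem' {x y} hx hy c hc := by
    simp only [galoisForm, Pi.add_apply, map_add, mul_add,
      Finset.sum_add_distrib] at *
    rw [hx c hc, hy c hc, add_zero]
  zero_mem' c _ := by simp [galoisForm]
  smul_mem' r x hx c hc := by
    simp only [galoisForm, Pi.smul_apply, smul_eq_mul, map_mul,
      mul_left_comm _ (τ r), ← Finset.mul_sum] at *
    rw [hx c hc, mul_zero]

theorem eq_zero_of_forall_galoisForm_eq_zero [DecidableEq ι] {τ : R ≃+* R} {v : ι → R}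
    (h : ∀ u, galoisForm τ u v = 0) : v = 0 := by
  funext i
  simpa [galoisForm, Pi.single_apply] using h (Pi.single i 1)

end GaloisForm

theorem galoisForm_ctMul_ctConj {R : Type*} [CommRing R] {n : ℕ} [NeZero n] (lam : Rˣ)
    (hlam : (lam : R) ^ 2 = 1) (τ : R ≃+* R) (hτ : τ lam = lam) (a b x : Fin n → R) :
    galoisForm τ (ctMul lam (ctConj lam τ a) b) x = galoisForm τ b (ctMul lam a x) := by
  simp only [galoisForm, ctMul_apply, ctConj, ctStar_apply lam hlam, map_sum, map_mul, map_pow,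
    hτ, Finset.sum_mul, Finset.mul_sum]
  rw [Finset.sum_comm]
  conv_rhs => rw [Finset.sum_comm]
  refine Fintype.sum_equiv (Equiv.neg (Fin n)) _ _ fun i => ?_
  refine Fintype.sum_equiv (Equiv.subRight i) _ _ fun k => ?_
  simp only [Equiv.neg_apply, Equiv.subRight_apply, sub_neg_eq_add, sub_add_cancel]
  have key : (lam : R) ^ i.addCarry (k - i) * (lam : R) ^ i.addCarry (-i)
      = (lam : R) ^ (-i).addCarry k := by
    rw [← pow_add, Fin.addCarry_self_neg_eq i k]
    exact pow_eq_pow_of_sq_eq_one hlam (by omega)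
  linear_combination (τ (a (-i)) * b (k - i) * τ (x k)) * key

instance {R M : Type*} [CommRing R] [Finite R] [AddCommGroup M] [Module R M] [Finite M] :
    Finite (Module.Dual R M) :=
  Finite.of_injective _ DFunLike.coe_injective

section ChainRing

open IsLocalRing

variable {R : Type*} [CommRing R] [IsLocalRing R] {t : R}

theorem exists_eq_unit_mul_pow (ht : maximalIdeal R = Ideal.span {t}) (htn : IsNilpotent t)
    (x : R) : ∃ (j : ℕ) (u : Rˣ), x = u * t ^ j := by
  obtain ⟨s, hs⟩ := htn
  suffices ∀ d c, ∃ (j : ℕ) (u : Rˣ), c * t ^ (s - d) = u * t ^ j by simpa using this s x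
  intro d
  induction d with
  | zero => exact fun c => ⟨s, 1, by simp [hs]⟩
  | succ d ih =>
    intro c
    by_cases hc : IsUnit c
    · exact ⟨s - (d + 1), hc.unit, rfl⟩
    obtain ⟨c', rfl⟩ : t ∣ c := Ideal.mem_span_singleton.mp (ht ▸ (mem_maximalIdeal c).mpr hc)
    rcases le_or_gt s d with hsd | hds
    · rw [show s - (d + 1) = s - d by omega]
      exact ih _
    · obtain ⟨j, u, h⟩ := ih c'
      exact ⟨j, u, by rw [← h, show s - d = s - (d + 1) + 1 by omega, pow_succ]; ring⟩

variable {s : ℕ}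

theorem ideal_eq_span_pow (ht : maximalIdeal R = Ideal.span {t}) (hs : t ^ s = 0)
    (I : Ideal R) : ∃ a ≤ s, I = Ideal.span {t ^ a} := by
  classical
  have hex : ∃ a, t ^ a ∈ I := ⟨s, hs ▸ I.zero_mem⟩
  refine ⟨Nat.find hex, Nat.find_min' hex (hs ▸ I.zero_mem), le_antisymm (fun x hx => ?_) ?_⟩
  · obtain ⟨j, u, rfl⟩ := exists_eq_unit_mul_pow ht ⟨s, hs⟩ x
    have hj : Nat.find hex ≤ j := Nat.find_min' hex ((I.unit_mul_mem_iff_mem u.isUnit).mp hx)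
    exact Ideal.mem_span_singleton.mpr (Dvd.dvd.mul_left (pow_dvd_pow t hj) _)
  · rw [Ideal.span_le, Set.singleton_subset_iff]
    exact Nat.find_spec hex

theorem mem_span_pow_of_mul_pow_eq_zero (ht : maximalIdeal R = Ideal.span {t})
    (hts : ∀ j, t ^ j = 0 ↔ s ≤ j) {a : ℕ} {x : R} (hx : x * t ^ a = 0) :
    x ∈ Ideal.span {t ^ (s - a)} := by
  obtain ⟨j, u, rfl⟩ := exists_eq_unit_mul_pow ht ⟨s, (hts s).2 le_rfl⟩ x
  have hja : s ≤ j + a := by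
    rw [← hts, pow_add]
    simpa [mul_assoc] using hx
  exact Ideal.mem_span_singleton.mpr (Dvd.dvd.mul_left (pow_dvd_pow t (by omega)) _)

theorem baer_self_of_maximalIdeal_eq_span (ht : maximalIdeal R = Ideal.span {t})
    (hts : ∀ j, t ^ j = 0 ↔ s ≤ j) : Module.Baer R R := by
  intro I g
  obtain ⟨a, ha, rfl⟩ := ideal_eq_span_pow ht ((hts s).2 le_rfl) I
  have hta : t ^ a ∈ Ideal.span {t ^ a} := Ideal.mem_span_singleton_self _
  obtain ⟨d, hd⟩ : t ^ a ∣ g ⟨t ^ a, hta⟩ := by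
    have hann : g ⟨t ^ a, hta⟩ * t ^ (s - a) = 0 := by
      rw [mul_comm, ← smul_eq_mul, ← map_smul]
      convert map_zero g
      ext
      simp [← pow_add, (hts _).2 (show s ≤ s - a + a by omega)]
    simpa [Nat.sub_sub_self ha, Ideal.mem_span_singleton] using
      mem_span_pow_of_mul_pow_eq_zero ht hts hann
  refine ⟨LinearMap.toSpanSingleton R R d, fun x hx => ?_⟩
  obtain ⟨r, rfl⟩ := Ideal.mem_span_singleton'.mp hx
  have hrx : (⟨r * t ^ a, hx⟩ : Ideal.span {t ^ a}) = r • ⟨t ^ a, hta⟩ := rfl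
  rw [hrx, map_smul, hd, LinearMap.toSpanSingleton_apply, smul_eq_mul, smul_eq_mul]
  ring

end ChainRing

section Duality

open IsLocalRing

variable {R : Type*} [CommRing R] [Finite R] [IsLocalRing R] {t : R} {s : ℕ}

theorem card_span_singleton_le_card_dual (ht : maximalIdeal R = Ideal.span {t})
    (hts : ∀ j, t ^ j = 0 ↔ s ≤ j) {M : Type*} [AddCommGroup M] [Module R M] (m : M) :
    Nat.card (R ∙ m) ≤ Nat.card (Module.Dual R (R ∙ m)) := by
  set I := LinearMap.ker (LinearMap.toSpanSingleton R M m)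
  obtain ⟨a, ha, hIa⟩ := ideal_eq_span_pow ht ((hts s).2 le_rfl) I
  let e : (R ⧸ I) ≃ₗ[R] (R ∙ m) := (LinearMap.quotKerEquivRange _).trans
    (LinearEquiv.ofEq _ _ (LinearMap.span_singleton_eq_range R M m).symm)
  have hle : I ≤ LinearMap.ker (LinearMap.toSpanSingleton R R (t ^ (s - a))) := by
    rw [hIa, Ideal.span_le, Set.singleton_subset_iff, SetLike.mem_coe, LinearMap.mem_ker,
      LinearMap.toSpanSingleton_apply, smul_eq_mul, ← pow_add, hts]
    omega
  -- multiplication by `t ^ (s - a)` embeds `R ⧸ (t ^ a)` into `R`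
  let L : R ⧸ I →ₗ[R] R := I.liftQ _ hle
  have hL : Function.Injective L := by
    refine (injective_iff_map_eq_zero L).mpr fun y hy => ?_
    obtain ⟨r, rfl⟩ := I.mkQ_surjective y
    have hr : r * t ^ (s - a) = 0 := hy
    have := mem_span_pow_of_mul_pow_eq_zero ht hts hr
    rwa [Nat.sub_sub_self ha, ← hIa, ← Submodule.Quotient.mk_eq_zero] at this
  have : Finite (R ⧸ I) := .of_surjective _ I.mkQ_surjective
  let Θ : R ⧸ I → Module.Dual R (R ⧸ I) := fun y => L ∘ₗ LinearMap.mulLeft R y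
  have hΘ : Function.Injective Θ := fun y z h => hL (by simpa [Θ] using LinearMap.congr_fun h 1)
  calc Nat.card (R ∙ m) = Nat.card (R ⧸ I) := Nat.card_congr e.symm.toEquiv
    _ ≤ Nat.card (Module.Dual R (R ⧸ I)) := Nat.card_le_card_of_injective Θ hΘ
    _ = Nat.card (Module.Dual R (R ∙ m)) := Nat.card_congr e.dualMap.symm.toEquiv

theorem card_le_card_dual (ht : maximalIdeal R = Ideal.span {t}) (hts : ∀ j, t ^ j = 0 ↔ s ≤ j)
    (M : Type*) [AddCommGroup M] [Module R M] [Finite M] :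
    Nat.card M ≤ Nat.card (Module.Dual R M) := by
  induction h : Nat.card M using Nat.strong_induction_on generalizing M with
  | _ N ih =>
  subst h
  rcases subsingleton_or_nontrivial M with hM | hM
  · exact (Finite.card_le_one_iff_subsingleton.mpr hM).trans Nat.card_pos
  obtain ⟨m, hm⟩ := exists_ne (0 : M)
  set P := R ∙ m
  have : Finite (M ⧸ P) := .of_surjective _ P.mkQ_surjective
  have hM : Nat.card M = Nat.card P * Nat.card (M ⧸ P) := P.card_eq_card_quotient_mul_card
  have hP : 1 < Nat.card P := by
    have : Nontrivial P := Submodule.nontrivial_span_singleton hm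
    exact Finite.one_lt_card
  have hQ := ih _ (by rw [hM]; nlinarith [Nat.card_pos (α := M ⧸ P)]) (M ⧸ P) rfl
  have hres : Function.Surjective P.dualRestrict := fun ψ =>
    (baer_self_of_maximalIdeal_eq_span ht hts).extension_property P.subtype P.injective_subtype ψ
  have hDual : Nat.card (Module.Dual R M)
      = Nat.card (Module.Dual R (M ⧸ P)) * Nat.card (Module.Dual R P) := by
    rw [P.dualRestrict.ker.card_eq_card_quotient_mul_card,
      Nat.card_congr (P.dualRestrict.quotKerEquivOfSurjective hres).toEquiv,
      P.dualRestrict_ker_eq_dualAnnihilator,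
      Nat.card_congr P.dualQuotEquivDualAnnihilator.toEquiv]
  rw [hM, hDual, mul_comm]
  exact Nat.mul_le_mul hQ (card_span_singleton_le_card_dual ht hts m)

end Duality

theorem card_le_card_mul_card_galoisDual {R : Type*} [CommRing R] [Finite R] {ι : Type*}
    [Fintype ι] [DecidableEq ι] (τ : R ≃+* R) (C : Submodule R (ι → R))
    (hQ : Nat.card ((ι → R) ⧸ C) ≤ Nat.card (Module.Dual R ((ι → R) ⧸ C))) :
    Nat.card (ι → R) ≤ Nat.card C * Nat.card (galoisDual τ C) := by
  have hexpand (φ : Module.Dual R ((ι → R) ⧸ C)) (x : ι → R) :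
      φ (C.mkQ x) = ∑ i, x i * φ (C.mkQ fun j => if i = j then 1 else 0) :=
    LinearMap.pi_apply_eq_sum_univ (φ ∘ₗ C.mkQ) x
  let Φ : Module.Dual R ((ι → R) ⧸ C) → galoisDual τ C := fun φ =>
    ⟨fun i => τ.symm (φ (C.mkQ fun j => if i = j then 1 else 0)), fun c hc => by
      simp only [galoisForm, RingEquiv.apply_symm_apply, ← hexpand]
      rw [Submodule.mkQ_apply, (Submodule.Quotient.mk_eq_zero C).mpr hc, map_zero]⟩
  have hΦ : Function.Injective Φ := fun φ ψ h => by
    have hi (i : ι) := τ.symm.injective (congrFun (congrArg Subtype.val h) i)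
    refine C.linearMap_qext (LinearMap.ext fun x => ?_)
    rw [LinearMap.comp_apply, LinearMap.comp_apply, hexpand φ x, hexpand ψ x]
    simp only [hi]
  rw [C.card_eq_card_quotient_mul_card]
  exact Nat.mul_le_mul_left _ (hQ.trans (Nat.card_le_card_of_injective Φ hΦ))

theorem Submodule.exists_add_eq_of_disjoint_of_card_le {R M : Type*} [Ring R] [AddCommGroup M]
    [Module R M] [Finite M] {C D : Submodule R M} (hCD : Disjoint C D)
    (hcard : Nat.card M ≤ Nat.card C * Nat.card D) (x : M) : ∃ c ∈ C, ∃ d ∈ D, c + d = x := by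
  let f := C.subtype.coprod D.subtype
  have hf : Function.Injective f := by
    rw [← LinearMap.ker_eq_bot, LinearMap.ker_coprod_of_disjoint_range _ _
      (by simpa only [Submodule.range_subtype] using hCD)]
    simp
  obtain ⟨⟨c, d⟩, hcd⟩ := ((Nat.bijective_iff_injective_and_card f).mpr
    ⟨hf, le_antisymm (Nat.card_le_card_of_injective f hf) (by rwa [Nat.card_prod])⟩).2 x
  exact ⟨c, c.2, d, d.2, hcd⟩

section ConstacyclicCode

variable {R : Type*} [CommRing R] {n : ℕ} [NeZero n] {lam : Rˣ} {τ : R ≃+* R}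
  {C : Submodule R (Fin n → R)}

theorem ctMul_mem_galoisDual (hlam : (lam : R) ^ 2 = 1) (hτ : τ lam = lam)
    (hC : ∀ x, ∀ c ∈ C, ctMul lam x c ∈ C) (a : Fin n → R) {x : Fin n → R}
    (hx : x ∈ galoisDual τ C) : ctMul lam a x ∈ galoisDual τ C := fun c hc => by
  rw [← galoisForm_ctMul_ctConj lam hlam τ hτ]
  exact hx _ (hC _ c hc)

theorem ctMul_ctConj_symm_eq_zero (hlam : (lam : R) ^ 2 = 1) (hτ : τ lam = lam)
    (hC : ∀ x, ∀ c ∈ C, ctMul lam x c ∈ C) {e x : Fin n → R} (he : e ∈ C)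
    (hx : x ∈ galoisDual τ C) : ctMul lam (ctConj lam τ.symm e) x = 0 := by
  refine eq_zero_of_forall_galoisForm_eq_zero (τ := τ) fun b => ?_
  rw [← galoisForm_ctMul_ctConj lam hlam τ hτ, ctConj_ctConj_symm lam hlam τ hτ, ctMul_comm]
  exact hx _ (hC b e he)

theorem idempotent_generator_of_add_eq_ctOne (hlam : (lam : R) ^ 2 = 1) (hτ : τ lam = lam)
    (hC : ∀ x, ∀ c ∈ C, ctMul lam x c ∈ C) (hCD : Disjoint C (galoisDual τ C))
    {e f : Fin n → R} (he : e ∈ C) (hf : f ∈ galoisDual τ C) (hef : e + f = ctOne) :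
    ctMul lam e e = e ∧ ctMul lam e (ctConj lam τ e) = e ∧
      ∀ x, x ∈ C ↔ ∃ a, x = ctMul lam a e := by
  have hunit (y : Fin n → R) (hf' : ctMul lam y f = 0) : ctMul lam y e = y := by
    have := ctMul_ctOne lam y
    rwa [← hef, ctMul_add_right, hf', add_zero] at this
  have hCunit (y : Fin n → R) (hy : y ∈ C) : ctMul lam y e = y :=
    hunit y (Submodule.disjoint_def.mp hCD _ (ctMul_comm lam y f ▸ hC f y hy)
      (ctMul_mem_galoisDual hlam hτ hC y hf))
  have hsharp := hunit _ (ctMul_ctConj_symm_eq_zero hlam hτ hC he hf)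
  refine ⟨hCunit e he, ?_, fun x => ⟨fun hx => ⟨x, (hCunit x hx).symm⟩, ?_⟩⟩
  · have := congrArg (ctConj lam τ) hsharp
    rwa [ctConj_ctMul lam hlam τ hτ, ctConj_ctConj_symm lam hlam τ hτ] at this
  · rintro ⟨a, rfl⟩
    exact hC a e he

theorem disjoint_galoisDual_of_idempotent_generator [Finite R] (hlam : (lam : R) ^ 2 = 1)
    (hτ : τ lam = lam) (hC : ∀ x, ∀ c ∈ C, ctMul lam x c ∈ C) {e : Fin n → R}
    (hee : ctMul lam e e = e) (heconj : ctMul lam e (ctConj lam τ e) = e)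
    (hgen : ∀ x, x ∈ C ↔ ∃ a, x = ctMul lam a e) : Disjoint C (galoisDual τ C) := by
  have hτ' : τ.symm lam = lam := τ.symm_apply_eq.mpr hτ.symm
  have he : e ∈ C := (hgen e).2 ⟨e, hee.symm⟩
  have hunit (y : Fin n → R) (hy : y ∈ C) : ctMul lam y e = y := by
    obtain ⟨a, rfl⟩ := (hgen y).1 hy
    rw [ctMul_assoc, hee]
  have hsharp : ctMul lam (ctConj lam τ.symm e) e = ctConj lam τ.symm e := by
    have := congrArg (ctConj lam τ.symm) heconj
    rwa [ctConj_ctMul lam hlam τ.symm hτ', ctConj_symm_ctConj lam hlam τ hτ] at this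
  have hmaps : Set.MapsTo (ctConj lam τ.symm) (C : Set (Fin n → R)) C := fun y hy => by
    rw [SetLike.mem_coe, ← hunit y hy, ctConj_ctMul lam hlam τ.symm hτ', ← hsharp,
      ← ctMul_assoc]
    exact (hgen _).2 ⟨_, rfl⟩
  have hdag : ctConj lam τ e ∈ C := by
    have hinj : Set.InjOn (ctConj lam τ.symm) (C : Set (Fin n → R)) :=
      Function.LeftInverse.injective (ctConj_ctConj_symm lam hlam τ hτ) |>.injOn
    obtain ⟨y, hy, rfl⟩ :=
      ((C : Set (Fin n → R)).toFinite.injOn_iff_bijOn_of_mapsTo hmaps).mp hinj |>.surjOn he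
    rwa [ctConj_ctConj_symm lam hlam τ hτ]
  have he_sharp : ctMul lam e (ctConj lam τ.symm e) = e := by
    have := congrArg (ctConj lam τ.symm) (hunit _ hdag)
    rwa [ctConj_ctMul lam hlam τ.symm hτ', ctConj_symm_ctConj lam hlam τ hτ] at this
  refine Submodule.disjoint_def.mpr fun x hxC hxD => ?_
  calc x = ctMul lam x e := (hunit x hxC).symm
    _ = ctMul lam (ctMul lam x e) (ctConj lam τ.symm e) := by rw [ctMul_assoc, he_sharp]
    _ = ctMul lam (ctConj lam τ.symm e) x := by rw [hunit x hxC, ctMul_comm]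
    _ = 0 := ctMul_ctConj_symm_eq_zero hlam hτ hC he hxD

end ConstacyclicCode

theorem kGalois_LCD_iff_idempotent_general {R : Type*} [CommRing R] [Fintype R]
    [IsLocalRing R] (hchain : (IsLocalRing.maximalIdeal R).IsPrincipal)
    {n : ℕ} [NeZero n]
    (σ : RingAut R) (m k : ℕ) (hord : orderOf σ = m) (hk : k < m)
    (lam : Rˣ) (hlam : (lam : R) ^ 2 = 1)
    (hσlam : (σ ^ (m - k)) ((lam : R)) = (lam : R))
    (C : Submodule R (Fin n → R))
    (hC : ∀ x : Fin n → R, ∀ c ∈ C, ctMul lam x c ∈ C) :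
    (∀ x ∈ C, (∀ c ∈ C, ∑ i : Fin n, c i * (σ ^ k) (x i) = 0) → x = 0) ↔
      ∃ e : Fin n → R, ctMul lam e e = e ∧
        ctMul lam e (ctStar lam (fun i => (σ ^ k) (e i))) = e ∧
        (∀ x, x ∈ C ↔ ∃ a : Fin n → R, x = ctMul lam a e) := by
  have hτ : (σ ^ k) lam = lam := by
    conv_lhs => rw [← hσlam, ← RingAut.mul_apply, ← pow_add, Nat.add_sub_cancel' hk.le, ← hord,
      pow_orderOf_eq_one]
    rfl
  obtain ⟨t, ht⟩ := hchain.principal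
  have htn : IsNilpotent t :=
    Ring.KrullDimLE.isNilpotent_iff_mem_maximalIdeal.mpr (ht ▸ Submodule.mem_span_singleton_self t)
  have hts (j : ℕ) : t ^ j = 0 ↔ nilpotencyClass t ≤ j :=
    ⟨fun h => Nat.sInf_le h, fun h => pow_eq_zero_of_le h (pow_nilpotencyClass htn)⟩
  have hcard := card_le_card_mul_card_galoisDual (σ ^ k) C (card_le_card_dual ht hts _)
  change (∀ x ∈ C, x ∈ galoisDual (σ ^ k) C → x = 0) ↔ _
  rw [← Submodule.disjoint_def]
  constructor
  · intro hCD
    obtain ⟨e, he, f, hf, hef⟩ := Submodule.exists_add_eq_of_disjoint_of_card_le hCD hcard ctOne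
    exact ⟨e, idempotent_generator_of_add_eq_ctOne hlam hτ hC hCD he hf hef⟩
  · rintro ⟨e, hee, heconj, hgen⟩
    exact disjoint_galoisDual_of_idempotent_generator hlam hτ hC hee heconj hgen

/-- Over a finite commutative chain ring `R` of characteristic `p`, with `σ`
an automorphism of order `m`, `λ² = 1` and `σ^{m-k}(λ) = λ`, a
`λ`-constacyclic code `C` (an ideal of `R^{γ_λ} C_n`) is a `k`-Galois LCD code
(`C ∩ C^{⊥_k} = {0}`) iff `C` is generated by an idempotent `e` with
`e = e·(σᵏ(e))*`. -/
theorem kGalois_LCD_iff_idempotent {R : Type*} [CommRing R] [Fintype R]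
    [IsLocalRing R] (hchain : (IsLocalRing.maximalIdeal R).IsPrincipal)
    (p : ℕ) (hp : p.Prime) (hchar : ringChar R = p)
    {n : ℕ} [NeZero n] (hn : ¬ p ∣ n)
    (σ : RingAut R) (m k : ℕ) (hord : orderOf σ = m) (hk : k < m)
    (lam : Rˣ) (hlam : (lam : R) ^ 2 = 1)
    (hσlam : (σ ^ (m - k)) ((lam : R)) = (lam : R))
    (C : Submodule R (Fin n → R))
    (hC : ∀ x : Fin n → R, ∀ c ∈ C, ctMul lam x c ∈ C) :
    (∀ x ∈ C, (∀ c ∈ C, ∑ i : Fin n, c i * (σ ^ k) (x i) = 0) → x = 0) ↔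
      ∃ e : Fin n → R, ctMul lam e e = e ∧
        ctMul lam e (ctStar lam (fun i => (σ ^ k) (e i))) = e ∧
        (∀ x, x ∈ C ↔ ∃ a : Fin n → R, x = ctMul lam a e) :=
  kGalois_LCD_iff_idempotent_general hchain σ m k hord hk lam hlam hσlam C hC
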